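/- For the ideal linear regression problem, the expected excess risk of the SGD iterate after k+1 steps equals [R(θ_0) - R(β*)] · ∏_{j=0}^{k} (1 + (α_j² - 2α_j)/d) + (Var(ε)/d) · [α_k² + ∑_{j=0}^{k-1} α_j² ∏_{l=j+1}^{k} (1 + (α_l² - 2α_l)/d)]. -/

import Mathlib

/-!
Write `eₖ = θₖ - β*`. One SGD step reads `eₖ₊₁ = eₖ + αₖ (εₖ₊₁ - ⟪Xₖ₊₁, eₖ⟫) Xₖ₊₁`, and since
`‖Xₖ₊₁‖ = 1` its squared norm is `‖eₖ‖² + (αₖ² - 2αₖ) ⟪Xₖ₊₁, eₖ⟫² + αₖ² εₖ₊₁²` plus a multiple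
of `εₖ₊₁ ⟪Xₖ₊₁, eₖ⟫`. The last term has mean zero because the noise is centred and independent
of `(Xₖ₊₁, eₖ)`. As `Xₖ₊₁` is uniform on the orthonormal basis formed by the columns of `Q` and
independent of `eₖ`, Parseval gives `E⟪Xₖ₊₁, eₖ⟫² = E‖eₖ‖² / d`. Hence `E‖eₖ‖²` obeys the affine
recursion `xₖ₊₁ = (1 + (αₖ² - 2αₖ)/d) xₖ + αₖ² Var(ε)`, whose unrolling is the formula.
-/

open MeasureTheory Filter Finset ProbabilityTheory
open scoped ENNReal RealInnerProductSpace

theorem Matrix.orthonormal_of_transpose_mul_self_eq_one {m n : Type*} [Fintype m]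
    [DecidableEq n] {Q : Matrix m n ℝ} (hQ : Q.transpose * Q = 1)
    {col : n → EuclideanSpace ℝ m} (hcol : ∀ i j, col j i = Q i j) : Orthonormal ℝ col := by
  rw [← gram_eq_one_iff_orthonormal, gram_eq_conjTranspose_mul (EuclideanSpace.basisFun m ℝ)]
  have hQcol : Matrix.of (fun i j => col j i) = Q := Matrix.ext hcol
  simpa [hQcol] using hQ

theorem Orthonormal.exists_orthonormalBasis_coe_eq {ι 𝕜 E : Type*} [RCLike 𝕜]
    [NormedAddCommGroup E] [InnerProductSpace 𝕜 E] [Fintype ι] [Nonempty ι] {v : ι → E}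
    (hv : Orthonormal 𝕜 v) (hcard : Fintype.card ι = Module.finrank 𝕜 E) :
    ∃ b : OrthonormalBasis ι 𝕜 E, ⇑b = v :=
  ⟨(basisOfOrthonormalOfCardEqFinrank hv hcard).toOrthonormalBasis
      (by rwa [coe_basisOfOrthonormalOfCardEqFinrank]),
    by simp⟩

theorem eq_mul_prod_add_sum_of_succ_eq_mul_add {R : Type*} [CommSemiring R] {x c u : ℕ → R}
    (h : ∀ n, x (n + 1) = c n * x n + u n) (k : ℕ) :
    x k = x 0 * ∏ j ∈ range k, c j + ∑ j ∈ range k, u j * ∏ l ∈ Ico (j + 1) k, c l := by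
  induction k with
  | zero => simp
  | succ k ih =>
    have hsum : ∑ j ∈ range k, u j * ∏ l ∈ Ico (j + 1) (k + 1), c l
        = c k * ∑ j ∈ range k, u j * ∏ l ∈ Ico (j + 1) k, c l := by
      rw [mul_sum]
      refine sum_congr rfl fun j hj => ?_
      rw [prod_Ico_succ_top (mem_range.1 hj)]
      ring
    rw [h, ih, prod_range_succ, sum_range_succ, hsum, Ico_self, prod_empty]
    ring

section

variable {E : Type*} [NormedAddCommGroup E] [InnerProductSpace ℝ E]

theorem inner_sq_le_norm_sq_of_norm_eq_one {x : E} (hx : ‖x‖ = 1) (y : E) :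
    ⟪x, y⟫ ^ 2 ≤ ‖y‖ ^ 2 := by
  simpa [hx] using pow_le_pow_left₀ (abs_nonneg _) (abs_real_inner_le_norm x y) 2

theorem norm_sq_add_smul_of_norm_eq_one {x : E} (hx : ‖x‖ = 1) (e : E) (a s : ℝ) :
    ‖e + (a * (s - ⟪x, e⟫)) • x‖ ^ 2 = ‖e‖ ^ 2 + (a ^ 2 - 2 * a) * ⟪x, e⟫ ^ 2 + a ^ 2 * s ^ 2
      + (2 * a - 2 * a ^ 2) * (s * ⟪x, e⟫) := by
  rw [norm_add_sq_real, norm_smul, real_inner_smul_right, hx, real_inner_comm, Real.norm_eq_abs,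
    mul_one, sq_abs]
  ring

variable {Ω ι : Type*} [MeasurableSpace Ω] {μ : Measure Ω} [IsProbabilityMeasure μ]
  [Fintype ι] [Nonempty ι]

theorem ae_exists_eq_of_measure_eq_inv_card {α : Type*} [MeasurableSpace α]
    [MeasurableSingletonClass α] {s : ι → α} (hs : Function.Injective s) {X : Ω → α}
    (hX : Measurable X) (hXs : ∀ j, μ {ω | X ω = s j} = (Fintype.card ι : ℝ≥0∞)⁻¹) :
    ∀ᵐ ω ∂μ, ∃ j, X ω = s j := by
  have hmeas : ∀ j, MeasurableSet {ω | X ω = s j} := fun j => hX (measurableSet_singleton (s j))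
  have hunion : {ω | ∃ j, X ω = s j} = ⋃ j, {ω | X ω = s j} := Set.ofPred_exists _
  rw [ae_iff_measure_eq (hunion ▸ MeasurableSet.iUnion hmeas).nullMeasurableSet, hunion,
    measure_iUnion (fun i j hij => Set.disjoint_left.2 fun ω hi hj => hij (hs (hi.symm.trans hj)))
      hmeas, tsum_fintype, measure_univ]
  simp only [hXs, sum_const, card_univ, nsmul_eq_mul]
  exact ENNReal.mul_inv_cancel (by simp) (by simp)

variable [MeasurableSpace E] [BorelSpace E]

theorem integral_inner_sq_eq_of_uniform_orthonormalBasis (b : OrthonormalBasis ι ℝ E)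
    {X Z : Ω → E} (hX : Measurable X) (hZ : Measurable Z)
    (hXb : ∀ j, μ {ω | X ω = b j} = (Fintype.card ι : ℝ≥0∞)⁻¹) (hXZ : IndepFun X Z μ)
    (hZ2 : Integrable (fun ω => ‖Z ω‖ ^ 2) μ) :
    ∫ ω, ⟪X ω, Z ω⟫ ^ 2 ∂μ = (Fintype.card ι : ℝ)⁻¹ * ∫ ω, ‖Z ω‖ ^ 2 ∂μ := by
  set φ : ι → E → ℝ := fun j => ({b j} : Set E).indicator 1
  have hφ : ∀ j, Measurable (φ j) := fun j => measurable_one.indicator (measurableSet_singleton _)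
  have hψ : ∀ j, Measurable fun z : E => ⟪b j, z⟫ ^ 2 := fun j => by fun_prop
  have hψZ : ∀ j, Integrable (fun ω => ⟪b j, Z ω⟫ ^ 2) μ := fun j =>
    hZ2.mono' ((hψ j).comp hZ).aestronglyMeasurable <| .of_forall fun ω => by
      simpa using inner_sq_le_norm_sq_of_norm_eq_one (b.orthonormal.1 j) (Z ω)
  have hφX : ∀ j, ∫ ω, φ j (X ω) ∂μ = (Fintype.card ι : ℝ)⁻¹ := fun j => by
    have : (fun ω => φ j (X ω)) = (X ⁻¹' {b j}).indicator 1 := by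
      ext ω; exact (Set.indicator_comp_right X).symm
    rw [this, integral_indicator_one (hX (measurableSet_singleton _)), measureReal_def]
    simp [Set.preimage, hXb]
  have hdecomp : (fun ω => ⟪X ω, Z ω⟫ ^ 2) =ᵐ[μ] fun ω => ∑ j, φ j (X ω) * ⟪b j, Z ω⟫ ^ 2 := by
    filter_upwards [ae_exists_eq_of_measure_eq_inv_card b.orthonormal.linearIndependent.injective
      hX hXb] with ω ⟨j₀, hj₀⟩
    rw [hj₀, sum_eq_single j₀]
    · simp [φ]
    · intro j _ hj
      simp [φ, b.orthonormal.linearIndependent.injective.ne hj.symm]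
    · simp
  have hφXψZ : ∀ j, Integrable (fun ω => φ j (X ω) * ⟪b j, Z ω⟫ ^ 2) μ := fun j =>
    (hψZ j).bdd_mul (c := 1) ((hφ j).comp hX).aestronglyMeasurable
      (.of_forall fun ω => by simp only [φ, Set.indicator]; split_ifs <;> simp)
  calc ∫ ω, ⟪X ω, Z ω⟫ ^ 2 ∂μ = ∑ j, ∫ ω, φ j (X ω) * ⟪b j, Z ω⟫ ^ 2 ∂μ := by
        rw [integral_congr_ae hdecomp, integral_finsetSum _ fun j _ => hφXψZ j]
    _ = ∑ j, (Fintype.card ι : ℝ)⁻¹ * ∫ ω, ⟪b j, Z ω⟫ ^ 2 ∂μ := sum_congr rfl fun j _ => by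
        rw [← hφX j]
        exact (hXZ.comp (hφ j) (hψ j)).integral_fun_mul_eq_mul_integral
          ((hφ j).comp hX).aestronglyMeasurable (hψZ j).aestronglyMeasurable
    _ = (Fintype.card ι : ℝ)⁻¹ * ∫ ω, ‖Z ω‖ ^ 2 ∂μ := by
        rw [← mul_sum, ← integral_finsetSum _ fun j _ => hψZ j]
        simp_rw [b.sum_sq_inner_right]

theorem integrable_and_integral_norm_sq_sgd_step (b : OrthonormalBasis ι ℝ E)
    {X e : Ω → E} {ε : Ω → ℝ} (a : ℝ) (hX : Measurable X)
    (hXb : ∀ j, μ {ω | X ω = b j} = (Fintype.card ι : ℝ≥0∞)⁻¹)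
    (he : Measurable e) (he2 : Integrable (fun ω => ‖e ω‖ ^ 2) μ)
    (hε : Measurable ε) (hε2 : Integrable (fun ω => ε ω ^ 2) μ) (hεmean : ∫ ω, ε ω ∂μ = 0)
    (hXe : IndepFun X e μ) (hεXe : IndepFun ε (fun ω => (X ω, e ω)) μ) :
    Integrable (fun ω => ‖e ω + (a * (ε ω - ⟪X ω, e ω⟫)) • X ω‖ ^ 2) μ ∧
      ∫ ω, ‖e ω + (a * (ε ω - ⟪X ω, e ω⟫)) • X ω‖ ^ 2 ∂μ
        = (1 + (a ^ 2 - 2 * a) / Fintype.card ι) * ∫ ω, ‖e ω‖ ^ 2 ∂μ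
          + a ^ 2 * ∫ ω, ε ω ^ 2 ∂μ := by
  have : FiniteDimensional ℝ E := b.toBasis.finiteDimensional_of_finite
  have hXnorm : ∀ᵐ ω ∂μ, ‖X ω‖ = 1 := by
    filter_upwards [ae_exists_eq_of_measure_eq_inv_card b.orthonormal.linearIndependent.injective
      hX hXb] with ω ⟨j, hj⟩
    rw [hj, b.orthonormal.1 j]
  have ht : Measurable fun ω => ⟪X ω, e ω⟫ := hX.inner he
  have ht2 : Integrable (fun ω => ⟪X ω, e ω⟫ ^ 2) μ :=
    he2.mono' (ht.pow_const 2).aestronglyMeasurable <| by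
      filter_upwards [hXnorm] with ω hω
      simpa using inner_sq_le_norm_sq_of_norm_eq_one hω (e ω)
  have hεt : Integrable (fun ω => ε ω * ⟪X ω, e ω⟫) μ :=
    ((memLp_two_iff_integrable_sq hε.aestronglyMeasurable).2 hε2).integrable_mul
      ((memLp_two_iff_integrable_sq ht.aestronglyMeasurable).2 ht2)
  have hcross : ∫ ω, ε ω * ⟪X ω, e ω⟫ ∂μ = 0 := by
    have hεt_indep : IndepFun ε (fun ω => ⟪X ω, e ω⟫) μ :=
      hεXe.comp measurable_id (measurable_fst.inner measurable_snd)
    rw [hεt_indep.integral_fun_mul_eq_mul_integral hε.aestronglyMeasurable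
      ht.aestronglyMeasurable, hεmean, zero_mul]
  have hexpand : (fun ω => ‖e ω + (a * (ε ω - ⟪X ω, e ω⟫)) • X ω‖ ^ 2) =ᵐ[μ] fun ω =>
      ‖e ω‖ ^ 2 + (a ^ 2 - 2 * a) * ⟪X ω, e ω⟫ ^ 2 + a ^ 2 * ε ω ^ 2
        + (2 * a - 2 * a ^ 2) * (ε ω * ⟪X ω, e ω⟫) := by
    filter_upwards [hXnorm] with ω hω
    exact norm_sq_add_smul_of_norm_eq_one hω (e ω) a (ε ω)
  have h1 : Integrable (fun ω => ‖e ω‖ ^ 2 + (a ^ 2 - 2 * a) * ⟪X ω, e ω⟫ ^ 2) μ :=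
    he2.add (ht2.const_mul _)
  have h2 : Integrable (fun ω =>
      ‖e ω‖ ^ 2 + (a ^ 2 - 2 * a) * ⟪X ω, e ω⟫ ^ 2 + a ^ 2 * ε ω ^ 2) μ :=
    h1.add (hε2.const_mul _)
  refine ⟨(h2.add (hεt.const_mul _)).congr hexpand.symm, ?_⟩
  rw [integral_congr_ae hexpand, integral_add h2 (hεt.const_mul _),
    integral_add h1 (hε2.const_mul _), integral_add he2 (ht2.const_mul _), integral_const_mul,
    integral_const_mul, integral_const_mul, hcross,
    integral_inner_sq_eq_of_uniform_orthonormalBasis b hX he hXb hXe he2]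
  ring

theorem integral_norm_sq_sgd_error_succ (b : OrthonormalBasis ι ℝ E) {X e : ℕ → Ω → E}
    {ε : ℕ → Ω → ℝ} (α : ℕ → ℝ) (hX : ∀ n, Measurable (X n))
    (hXb : ∀ n j, μ {ω | X n ω = b j} = (Fintype.card ι : ℝ≥0∞)⁻¹)
    (he : ∀ n, Measurable (e n)) (he0 : Integrable (fun ω => ‖e 0 ω‖ ^ 2) μ)
    (hε : ∀ n, Measurable (ε n)) (hε2 : ∀ n, Integrable (fun ω => ε n ω ^ 2) μ)
    (hεmean : ∀ n, ∫ ω, ε n ω ∂μ = 0)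
    (he_succ : ∀ n ω,
      e (n + 1) ω = e n ω + (α n * (ε (n + 1) ω - ⟪X (n + 1) ω, e n ω⟫)) • X (n + 1) ω)
    (hXe : ∀ n, IndepFun (X (n + 1)) (e n) μ)
    (hεXe : ∀ n, IndepFun (ε (n + 1)) (fun ω => (X (n + 1) ω, e n ω)) μ) (n : ℕ) :
    ∫ ω, ‖e (n + 1) ω‖ ^ 2 ∂μ = (1 + (α n ^ 2 - 2 * α n) / Fintype.card ι)
      * ∫ ω, ‖e n ω‖ ^ 2 ∂μ + α n ^ 2 * ∫ ω, ε (n + 1) ω ^ 2 ∂μ := by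
  have step : ∀ n, Integrable (fun ω => ‖e n ω‖ ^ 2) μ →
      Integrable (fun ω => ‖e (n + 1) ω‖ ^ 2) μ ∧
        ∫ ω, ‖e (n + 1) ω‖ ^ 2 ∂μ = (1 + (α n ^ 2 - 2 * α n) / Fintype.card ι)
          * ∫ ω, ‖e n ω‖ ^ 2 ∂μ + α n ^ 2 * ∫ ω, ε (n + 1) ω ^ 2 ∂μ := fun n h => by
    simpa only [he_succ n] using integrable_and_integral_norm_sq_sgd_step b (α n) (hX (n + 1))
      (hXb (n + 1)) (he n) h (hε (n + 1)) (hε2 (n + 1)) (hεmean (n + 1)) (hXe n) (hεXe n)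
  have hint : ∀ n, Integrable (fun ω => ‖e n ω‖ ^ 2) μ := by
    intro n
    induction n with
    | zero => exact he0
    | succ n ih => exact (step n ih).1
  exact (step n (hint n)).2

end

theorem sgd_ideal_expected_excess_risk_general
    {Ω : Type*} [MeasurableSpace Ω] (μ : Measure Ω) [IsProbabilityMeasure μ]
    (d : ℕ) (hd : 0 < d)
    (Q : Matrix (Fin d) (Fin d) ℝ) (hQ : Q.transpose * Q = 1)
    (col : Fin d → EuclideanSpace ℝ (Fin d)) (hcol : ∀ i j, col j i = Q i j)
    (X : ℕ → Ω → EuclideanSpace ℝ (Fin d)) (ε : ℕ → Ω → ℝ)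
    (hXmeas : ∀ k, Measurable (X k)) (hεmeas : ∀ k, Measurable (ε k))
    (hXunif : ∀ k j, μ {ω | X k ω = col j} = (d : ℝ≥0∞)⁻¹)
    (hεmean : ∀ k, ∫ ω, ε k ω ∂μ = 0)
    (v : ℝ) (hεvar : ∀ k, ∫ ω, (ε k ω) ^ 2 ∂μ = v)
    (M : ℝ) (hεbdd : ∀ k ω, |ε k ω| ≤ M)
    (α : ℕ → ℝ)
    (βstar θ0 : EuclideanSpace ℝ (Fin d))
    (Y : ℕ → Ω → ℝ) (hY : ∀ k ω, Y k ω = ⟪X k ω, βstar⟫ + ε k ω)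
    (θ : ℕ → Ω → EuclideanSpace ℝ (Fin d))
    (hθ0 : ∀ ω, θ 0 ω = θ0)
    (hθ : ∀ k ω, θ (k + 1) ω
        = θ k ω + (α k * (Y (k + 1) ω - ⟪X (k + 1) ω, θ k ω⟫)) • X (k + 1) ω)
    (hindepX : ∀ k, ProbabilityTheory.IndepFun (X (k + 1)) (θ k) μ)
    (hindepε : ∀ k,
      ProbabilityTheory.IndepFun (ε (k + 1)) (fun ω => (X (k + 1) ω, θ k ω)) μ)
    (k : ℕ) :
    (1 / (d : ℝ)) * ∫ ω, ‖θ (k + 1) ω - βstar‖ ^ 2 ∂μ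
      = ((1 / (d : ℝ)) * ‖θ0 - βstar‖ ^ 2)
          * ∏ j ∈ Finset.range (k + 1), (1 + ((α j) ^ 2 - 2 * α j) / d)
        + (v / d) * ((α k) ^ 2
            + ∑ j ∈ Finset.range k, (α j) ^ 2
                * ∏ l ∈ Finset.Ico (j + 1) (k + 1),
                    (1 + ((α l) ^ 2 - 2 * α l) / d)) := by
  have : Nonempty (Fin d) := ⟨⟨0, hd⟩⟩
  obtain ⟨b, hb⟩ := (Matrix.orthonormal_of_transpose_mul_self_eq_one hQ hcol
    ).exists_orthonormalBasis_coe_eq (by simp)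
  have hθmeas : ∀ n, Measurable (θ n) := by
    intro n
    induction n with
    | zero => simp [funext hθ0]
    | succ n ih =>
      have := hXmeas (n + 1)
      have := hεmeas (n + 1)
      simp only [funext (hθ n), hY]
      fun_prop
  have hε2 : ∀ n, Integrable (fun ω => ε n ω ^ 2) μ := fun n =>
    .of_bound ((hεmeas n).pow_const 2).aestronglyMeasurable (M ^ 2) <| .of_forall fun ω => by
      simpa [sq_abs] using pow_le_pow_left₀ (abs_nonneg _) (hεbdd n ω) 2
  have hrec := integral_norm_sq_sgd_error_succ b α (e := fun n ω => θ n ω - βstar) hXmeas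
    (by simpa [hb] using hXunif) (fun n => (hθmeas n).sub_const βstar) (by simp [hθ0]) hεmeas
    hε2 hεmean (fun n ω => by rw [hθ, hY, inner_sub_right]; module)
    (fun n => (hindepX n).comp measurable_id (measurable_id.sub_const βstar))
    (fun n => (hindepε n).comp measurable_id
      (measurable_fst.prodMk (measurable_snd.sub_const βstar)))
  rw [eq_mul_prod_add_sum_of_succ_eq_mul_add (x := fun n => ∫ ω, ‖θ n ω - βstar‖ ^ 2 ∂μ)
      (fun n => by rw [hrec n, hεvar, Fintype.card_fin]) (k + 1),
    sum_range_succ, Ico_self, prod_empty]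
  simp only [hθ0, integral_const, probReal_univ, one_smul, mul_one, mul_right_comm _ v, ← sum_mul]
  ring

/-- Ideal problem: the expected excess risk of the SGD iterate after `k+1` steps
equals `[R(θ₀) - R(β*)] ∏_{j=0}^{k} (1 + (α_j² - 2α_j)/d)
+ (Var(ε)/d) [α_k² + ∑_{j=0}^{k-1} α_j² ∏_{l=j+1}^{k} (1 + (α_l² - 2α_l)/d)]`,
where `R(β) = Var(ε) + (1/d)‖β - β*‖²`, so the excess risk of `β` is
`(1/d)‖β - β*‖²`. -/
theorem sgd_ideal_expected_excess_risk
    {Ω : Type*} [MeasurableSpace Ω] (μ : Measure Ω) [IsProbabilityMeasure μ]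
    (d : ℕ) (hd : 0 < d)
    (Q : Matrix (Fin d) (Fin d) ℝ) (hQ : Q.transpose * Q = 1)
    (col : Fin d → EuclideanSpace ℝ (Fin d)) (hcol : ∀ i j, col j i = Q i j)
    (X : ℕ → Ω → EuclideanSpace ℝ (Fin d)) (ε : ℕ → Ω → ℝ)
    (hXmeas : ∀ k, Measurable (X k)) (hεmeas : ∀ k, Measurable (ε k))
    (hXunif : ∀ k j, μ {ω | X k ω = col j} = (d : ℝ≥0∞)⁻¹)
    (hεmean : ∀ k, ∫ ω, ε k ω ∂μ = 0)
    (v : ℝ) (hεvar : ∀ k, ∫ ω, (ε k ω) ^ 2 ∂μ = v)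
    (M : ℝ) (hεbdd : ∀ k ω, |ε k ω| ≤ M)
    (α : ℕ → ℝ) (hα : ∀ k, 0 ≤ α k)
    (βstar θ0 : EuclideanSpace ℝ (Fin d))
    (Y : ℕ → Ω → ℝ) (hY : ∀ k ω, Y k ω = ⟪X k ω, βstar⟫ + ε k ω)
    (θ : ℕ → Ω → EuclideanSpace ℝ (Fin d))
    (hθ0 : ∀ ω, θ 0 ω = θ0)
    (hθ : ∀ k ω, θ (k + 1) ω
        = θ k ω + (α k * (Y (k + 1) ω - ⟪X (k + 1) ω, θ k ω⟫)) • X (k + 1) ω)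
    (hindepX : ∀ k, ProbabilityTheory.IndepFun (X (k + 1)) (θ k) μ)
    (hindepε : ∀ k,
      ProbabilityTheory.IndepFun (ε (k + 1)) (fun ω => (X (k + 1) ω, θ k ω)) μ)
    (k : ℕ) :
    (1 / (d : ℝ)) * ∫ ω, ‖θ (k + 1) ω - βstar‖ ^ 2 ∂μ
      = ((1 / (d : ℝ)) * ‖θ0 - βstar‖ ^ 2)
          * ∏ j ∈ Finset.range (k + 1), (1 + ((α j) ^ 2 - 2 * α j) / d)
        + (v / d) * ((α k) ^ 2
            + ∑ j ∈ Finset.range k, (α j) ^ 2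
                * ∏ l ∈ Finset.Ico (j + 1) (k + 1),
                    (1 + ((α l) ^ 2 - 2 * α l) / d)) :=
  sgd_ideal_expected_excess_risk_general μ d hd Q hQ col hcol X ε hXmeas hεmeas hXunif hεmean v
    hεvar M hεbdd α βstar θ0 Y hY θ hθ0 hθ hindepX hindepε k
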